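/- Let a > −1 and ε ∈ [0,1), and set ρ_ε^a(y) := (ε²+y²)^{a/2}. Define h_1(y) := ∫_0^y ρ_ε^{−a}(s) (∫_0^s ρ_ε^a(τ) dτ) ds and, recursively, h_{i+1}(y) := ∫_0^y ρ_ε^{−a}(s) (∫_0^s ρ_ε^a(τ) h_i(τ) dτ) ds for i ≥ 1. Then for every i ≥ 1: lim_{y→+∞} h_i(y)/y^{2i} = ∏_{m=1}^{i} 1/(2m(2m−1+a)). In particular, lim_{y→+∞} h_1(y)/y² = 1/(2(1+a)). -/

import Mathlib

open MeasureTheory Set Filter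
open scoped Topology ENNReal BigOperators

noncomputable section

/-- the space ℝ^{N+1} with Euclidean norm -/
abbrev Spc (N : ℕ) := EuclideanSpace ℝ (Fin (N + 1))

/-- the weight ρ_ε^a(y) = (ε² + y²)^{a/2}; for ε = 0 this is |y|^a -/
def rho (ε a y : ℝ) : ℝ := (ε ^ 2 + y ^ 2) ^ (a / 2)

/-- the vertical coordinate y of a point z ∈ ℝ^{N+1} -/
def ycoord {N : ℕ} (z : Spc N) : ℝ := z (Fin.last N)

/-- the weight as a function of a space-time point -/
def wgt (N : ℕ) (ε a : ℝ) (p : Spc N × ℝ) : ℝ := rho ε a (ycoord p.1)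

/-- the ball B_r ⊂ ℝ^{N+1} -/
def sball (N : ℕ) (r : ℝ) : Set (Spc N) := Metric.ball 0 r

/-- the half ball B_r^+ -/
def sballPlus (N : ℕ) (r : ℝ) : Set (Spc N) := Metric.ball 0 r ∩ {z | 0 < ycoord z}

/-- time interval I_r = (-r², r²) -/
def timeInt (r : ℝ) : Set ℝ := Ioo (-(r ^ 2)) (r ^ 2)

/-- the parabolic cylinder Q_r -/
def cyl (N : ℕ) (r : ℝ) : Set (Spc N × ℝ) := sball N r ×ˢ timeInt r

/-- the half parabolic cylinder Q_r^+ -/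
def cylPlus (N : ℕ) (r : ℝ) : Set (Spc N × ℝ) := sballPlus N r ×ˢ timeInt r

/-- spatial partial derivative in the i-th direction of a space-time function -/
def sDeriv {N : ℕ} (φ : Spc N × ℝ → ℝ) (i : Fin (N + 1)) (p : Spc N × ℝ) : ℝ :=
  fderiv ℝ φ p (EuclideanSpace.single i 1, 0)

/-- time derivative of a space-time function -/
def tDeriv {N : ℕ} (φ : Spc N × ℝ → ℝ) (p : Spc N × ℝ) : ℝ :=
  fderiv ℝ φ p (0, 1)

/-- smooth functions compactly supported inside S -/
def IsTest {N : ℕ} (S : Set (Spc N × ℝ)) (φ : Spc N × ℝ → ℝ) : Prop :=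
  ContDiff ℝ (⊤ : ℕ∞) φ ∧ HasCompactSupport φ ∧ tsupport φ ⊆ S

/-- bilinear pairing ∑ᵢⱼ Aᵢⱼ vⱼ wᵢ, i.e. (A v)·w -/
def apair {N : ℕ} (A : Matrix (Fin (N + 1)) (Fin (N + 1)) ℝ) (v w : Fin (N + 1) → ℝ) : ℝ :=
  ∑ i, ∑ j, A i j * v j * w i

/-- uniform ellipticity (with symmetry) of a matrix field on a set -/
def Elliptic {N : ℕ} (A : Spc N × ℝ → Matrix (Fin (N + 1)) (Fin (N + 1)) ℝ)
    (lam Lam : ℝ) (S : Set (Spc N × ℝ)) : Prop :=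
  ∀ p ∈ S, (A p).IsSymm ∧ ∀ ξ : Fin (N + 1) → ℝ,
    lam * ∑ i, ξ i ^ 2 ≤ apair (A p) ξ ξ ∧ apair (A p) ξ ξ ≤ Lam * ∑ i, ξ i ^ 2

/-- general weighted weak-solution predicate for
`w ∂ₜu − div(w A ∇u) = w f + div(w F)` on `B ×ˢ I`:
`gu` is a weak spatial gradient of `u` (tested in `Sgrad`), `u` has finite weighted energy,
`t ↦ ∫ w u(·,t)²` is essentially bounded, and the weak formulation holds for test functions
supported in `Stest`. -/
def WeakSol (N : ℕ) (w : Spc N × ℝ → ℝ)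
    (A : Spc N × ℝ → Matrix (Fin (N + 1)) (Fin (N + 1)) ℝ)
    (f : Spc N × ℝ → ℝ) (F : Spc N × ℝ → Fin (N + 1) → ℝ)
    (u : Spc N × ℝ → ℝ) (gu : Spc N × ℝ → Fin (N + 1) → ℝ)
    (B : Set (Spc N)) (I : Set ℝ) (Sgrad Stest : Set (Spc N × ℝ)) : Prop :=
  (∀ i : Fin (N + 1), ∀ φ : Spc N × ℝ → ℝ, IsTest Sgrad φ →
      ∫ p in B ×ˢ I, u p * sDeriv φ i p = -∫ p in B ×ˢ I, gu p i * φ p) ∧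
  IntegrableOn (fun p => w p * (u p ^ 2 + ∑ i, gu p i ^ 2)) (B ×ˢ I) ∧
  (∃ M : ℝ, ∀ᵐ t ∂(volume.restrict I), (∫ z in B, w (z, t) * u (z, t) ^ 2) ≤ M) ∧
  ∀ φ : Spc N × ℝ → ℝ, IsTest Stest φ →
    (-∫ p in B ×ˢ I, w p * (u p * tDeriv φ p)) +
        (∫ p in B ×ˢ I, w p * apair (A p) (gu p) (fun i => sDeriv φ i p)) =
      ∫ p in B ×ˢ I, w p * (f p * φ p - ∑ i, F p i * sDeriv φ i p)

/-- the class of test functions 𝒟_c^∞(Q_r) (depends on ε and a) -/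
def Dtest (N : ℕ) (ε a r : ℝ) : Set (Spc N × ℝ) :=
  if ε = 0 ∧ 1 ≤ |a| then cyl N r \ {p | ycoord p.1 = 0} else cyl N r

/-- weak solution in the full cylinder Q_r with weight ρ_ε^a -/
def WeakSolCyl (N : ℕ) (ε a : ℝ)
    (A : Spc N × ℝ → Matrix (Fin (N + 1)) (Fin (N + 1)) ℝ)
    (f : Spc N × ℝ → ℝ) (F : Spc N × ℝ → Fin (N + 1) → ℝ)
    (u : Spc N × ℝ → ℝ) (gu : Spc N × ℝ → Fin (N + 1) → ℝ) (r : ℝ) : Prop :=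
  WeakSol N (wgt N ε a) A f F u gu (sball N r) (timeInt r) (Dtest N ε a r) (Dtest N ε a r)

/-- weak solution in the half cylinder Q_r^+ with conormal boundary condition on ∂⁰Q_r^+
(test functions range over C_c^∞(Q_r), not vanishing on Σ) -/
def WeakSolHalf (N : ℕ) (ε a : ℝ)
    (A : Spc N × ℝ → Matrix (Fin (N + 1)) (Fin (N + 1)) ℝ)
    (f : Spc N × ℝ → ℝ) (F : Spc N × ℝ → Fin (N + 1) → ℝ)
    (u : Spc N × ℝ → ℝ) (gu : Spc N × ℝ → Fin (N + 1) → ℝ) (r : ℝ) : Prop :=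
  WeakSol N (wgt N ε a) A f F u gu (sballPlus N r) (timeInt r) (cylPlus N r) (cyl N r)

/-- parabolic distance -/
def dparab {N : ℕ} (P Q : Spc N × ℝ) : ℝ := Real.sqrt (‖P.1 - Q.1‖ ^ 2 + |P.2 - Q.2|)

/-- `‖v‖_{L^∞(Ω)} ≤ M` and `[v]_{C^{0,α}_p(Ω)} ≤ M` -/
def C0ParabBound {N : ℕ} (α : ℝ) (Ω : Set (Spc N × ℝ)) (v : Spc N × ℝ → ℝ) (M : ℝ) : Prop :=
  (∀ P ∈ Ω, |v P| ≤ M) ∧ ∀ P ∈ Ω, ∀ Q ∈ Ω, |v P - v Q| ≤ M * dparab P Q ^ α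

/-- `v` has spatial partial derivatives `gv` on Ω and all the quantities entering
`‖v‖_{C^{1,α}_p(Ω)}` are bounded by `M` -/
def C1ParabBound {N : ℕ} (α : ℝ) (Ω : Set (Spc N × ℝ)) (v : Spc N × ℝ → ℝ)
    (gv : Spc N × ℝ → Fin (N + 1) → ℝ) (M : ℝ) : Prop :=
  (∀ P ∈ Ω, ∀ i, HasLineDerivAt ℝ v (gv P i) P (EuclideanSpace.single i 1, 0)) ∧
  (∀ P ∈ Ω, |v P| ≤ M) ∧
  (∀ P ∈ Ω, ∀ i, |gv P i| ≤ M) ∧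
  (∀ P ∈ Ω, ∀ Q ∈ Ω, ∀ i, |gv P i - gv Q i| ≤ M * dparab P Q ^ α) ∧
  ∀ z : Spc N, ∀ t τ : ℝ, (z, t) ∈ Ω → (z, τ) ∈ Ω →
    |v (z, t) - v (z, τ)| ≤ M * |t - τ| ^ ((1 + α) / 2)

/-- weighted L^e norm of g on S -/
def wLp (N : ℕ) (w : Spc N × ℝ → ℝ) (S : Set (Spc N × ℝ)) (g : Spc N × ℝ → ℝ) (e : ℝ) : ℝ :=
  (∫ q in S, w q * |g q| ^ e) ^ (1 / e)

/-- pointwise euclidean magnitude |F| of a vector field -/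
def vmag {N : ℕ} (F : Spc N × ℝ → Fin (N + 1) → ℝ) (q : Spc N × ℝ) : ℝ :=
  Real.sqrt (∑ i, F q i ^ 2)

end

/-- the iterated functions `h_i`: `h_0 ≡ 1` and
`h_{i+1}(y) = ∫_0^y ρ_ε^{-a}(s) (∫_0^s ρ_ε^a(τ) h_i(τ) dτ) ds`, so that
`h_1(y) = ∫_0^y ρ_ε^{-a}(s) (∫_0^s ρ_ε^a(τ) dτ) ds`. -/
noncomputable def hfun (ε a : ℝ) : ℕ → ℝ → ℝ
  | 0 => fun _ => 1
  | (i + 1) => fun y =>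
      ∫ s in (0 : ℝ)..y, rho ε (-a) s * ∫ τ in (0 : ℝ)..s, rho ε a τ * hfun ε a i τ



lemma rho_nonneg (ε b y : ℝ) : 0 ≤ rho ε b y := Real.rpow_nonneg (by positivity) _

lemma rho_mul_inv {ε a y : ℝ} (h : 0 < ε ^ 2 + y ^ 2) : rho ε (-a) y * rho ε a y = 1 := by
  unfold rho
  rw [← Real.rpow_add h, show -a / 2 + a / 2 = 0 by ring, Real.rpow_zero]

lemma rho_continuousAt {ε b y : ℝ} (h : 0 < ε ^ 2 + y ^ 2) : ContinuousAt (rho ε b) y := by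
  apply ContinuousAt.rpow_const
  · exact (continuous_const.add (continuous_pow 2)).continuousAt
  · exact Or.inl h.ne'

lemma rho_continuousOn {ε b : ℝ} (hε : 0 ≤ ε) (s : Set ℝ) (hs : ∀ y ∈ s, y ≠ 0) :
    ContinuousOn (rho ε b) s := fun y hy =>
  (rho_continuousAt (by have := hs y hy; positivity)).continuousWithinAt

lemma rho_zero_eq (b y : ℝ) : rho 0 b y = |y| ^ b := by
  unfold rho
  rw [show (0:ℝ) ^ 2 + y ^ 2 = |y| ^ 2 by rw [sq_abs]; ring,
    ← Real.rpow_natCast |y| 2, ← Real.rpow_mul (abs_nonneg y)]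
  congr 1
  push_cast
  ring

lemma rho_intervalIntegrable {ε a : ℝ} (hε : 0 ≤ ε) (ha : -1 < a) {s : ℝ} (hs : 0 ≤ s) :
    IntervalIntegrable (rho ε a) volume 0 s := by
  rcases eq_or_lt_of_le hε with hε0 | hε0
  · have h0 := intervalIntegral.intervalIntegrable_rpow' (a := 0) (b := s) ha
    rw [intervalIntegrable_iff_integrableOn_Ioc_of_le hs] at h0 ⊢
    apply h0.congr_fun ?_ measurableSet_Ioc
    intro τ hτ
    rw [← hε0, rho_zero_eq, abs_of_pos hτ.1]
  · apply Continuous.intervalIntegrable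
    apply Continuous.rpow_const (continuous_const.add (continuous_pow 2))
    intro x
    exact Or.inl (ne_of_gt (by have h := pow_pos hε0 2; have h2 := sq_nonneg x; show (0:ℝ) < ε ^ 2 + x ^ 2; linarith))

lemma rho_div_rpow_tendsto {ε : ℝ} (hε : 0 ≤ ε) (b : ℝ) :
    Tendsto (fun y : ℝ => rho ε b y / y ^ b) atTop (𝓝 1) := by
  have h0 : Tendsto (fun y : ℝ => ε / y) atTop (𝓝 0) :=
    tendsto_const_nhds.div_atTop tendsto_id
  have h1 : Tendsto (fun y : ℝ => 1 + (ε / y) ^ 2) atTop (𝓝 1) := by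
    simpa using tendsto_const_nhds.add (h0.pow 2)
  have h2 : Tendsto (fun x : ℝ => x ^ (b / 2)) (𝓝 1) (𝓝 1) := by
    have := Real.continuousAt_rpow_const 1 (b / 2) (Or.inl one_ne_zero)
    unfold ContinuousAt at this
    simp only [Real.one_rpow] at this
    exact this
  apply (h2.comp h1).congr'
  filter_upwards [eventually_gt_atTop (0:ℝ)] with y hy
  have hy2 : (0:ℝ) < y ^ 2 := by positivity
  show (1 + (ε / y) ^ 2) ^ (b / 2) = rho ε b y / y ^ b
  rw [rho, show (1 + (ε / y) ^ 2) = (ε ^ 2 + y ^ 2) / y ^ 2 by field_simp; ring,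
    Real.div_rpow (by positivity) hy2.le,
    show ((y:ℝ) ^ 2) ^ (b / 2) = y ^ b by
      rw [← Real.rpow_natCast y 2, ← Real.rpow_mul hy.le]; congr 1; push_cast; ring]
lemma tendsto_primitive_div_rpow {f : ℝ → ℝ} {p L : ℝ} (hp : -1 < p)
    (hint : ∀ b : ℝ, 0 ≤ b → IntervalIntegrable f volume 0 b)
    (hf : Tendsto (fun y => f y / y ^ p) atTop (𝓝 L)) :
    Tendsto (fun y => (∫ t in (0:ℝ)..y, f t) / y ^ (p + 1)) atTop (𝓝 (L / (p + 1))) := by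
  have hp1 : 0 < p + 1 := by linarith
  rw [Metric.tendsto_nhds]
  intro δ hδ
  set δ₁ := δ * (p + 1) / 4 with hδ₁def
  have hδ₁ : 0 < δ₁ := by positivity
  obtain ⟨Y₀, hY₀⟩ := eventually_atTop.1 (Metric.tendsto_nhds.1 hf δ₁ hδ₁)
  set Y := max Y₀ 1 with hYdef
  have hY1 : (1:ℝ) ≤ Y := le_max_right _ _
  have hY0 : (0:ℝ) < Y := lt_of_lt_of_le one_pos hY1
  set C₀ := |(∫ t in (0:ℝ)..Y, f t) - L * Y ^ (p + 1) / (p + 1)| with hC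
  have key : ∀ y : ℝ, Y ≤ y →
      |(∫ t in (0:ℝ)..y, f t) - L * y ^ (p + 1) / (p + 1)| ≤ C₀ + δ₁ * y ^ (p + 1) / (p + 1) := by
    intro y hy
    have hy0 : (0:ℝ) < y := lt_of_lt_of_le hY0 hy
    have hIf : IntervalIntegrable f volume Y y := by
      apply (hint y hy0.le).mono_set
      rw [Set.uIcc_of_le hy, Set.uIcc_of_le hy0.le]
      exact Set.Icc_subset_Icc hY0.le le_rfl
    have hsplit : (∫ t in (0:ℝ)..y, f t) = (∫ t in (0:ℝ)..Y, f t) + ∫ t in Y..y, f t :=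
      (intervalIntegral.integral_add_adjacent_intervals (hint Y hY0.le) hIf).symm
    have hrp : IntervalIntegrable (fun t : ℝ => t ^ p) volume Y y :=
      intervalIntegral.intervalIntegrable_rpow' hp
    have hIp : (∫ t in Y..y, (t:ℝ) ^ p) = (y ^ (p + 1) - Y ^ (p + 1)) / (p + 1) :=
      integral_rpow (Or.inl hp)
    have hYyle : Y ^ (p + 1) ≤ y ^ (p + 1) := Real.rpow_le_rpow hY0.le hy hp1.le
    have hYp1 : (0:ℝ) ≤ Y ^ (p + 1) := Real.rpow_nonneg hY0.le _
    have hmid : |(∫ t in Y..y, f t) - L * (y ^ (p + 1) - Y ^ (p + 1)) / (p + 1)| ≤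
        δ₁ * (y ^ (p + 1) - Y ^ (p + 1)) / (p + 1) := by
      have heq : (∫ t in Y..y, f t) - L * (y ^ (p + 1) - Y ^ (p + 1)) / (p + 1) =
          ∫ t in Y..y, (f t - L * t ^ p) := by
        rw [intervalIntegral.integral_sub hIf (hrp.const_mul L),
          intervalIntegral.integral_const_mul, hIp]
        ring
      rw [heq]
      have hb : IntervalIntegrable (fun t : ℝ => δ₁ * t ^ p) volume Y y := hrp.const_mul δ₁
      have hbd := intervalIntegral.norm_integral_le_abs_of_norm_le (μ := volume)
        (f := fun t => f t - L * t ^ p) (g := fun t => δ₁ * t ^ p) (a := Y) (b := y) ?_ hb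
      · rw [intervalIntegral.integral_const_mul, hIp] at hbd
        have : |δ₁ * ((y ^ (p + 1) - Y ^ (p + 1)) / (p + 1))| =
            δ₁ * (y ^ (p + 1) - Y ^ (p + 1)) / (p + 1) := by
          rw [abs_of_nonneg]
          · ring
          · apply mul_nonneg hδ₁.le
            apply div_nonneg (by linarith) hp1.le
        calc |∫ t in Y..y, (f t - L * t ^ p)| = ‖∫ t in Y..y, (f t - L * t ^ p)‖ :=
              (Real.norm_eq_abs _).symm
          _ ≤ |δ₁ * ((y ^ (p + 1) - Y ^ (p + 1)) / (p + 1))| := hbd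
          _ = δ₁ * (y ^ (p + 1) - Y ^ (p + 1)) / (p + 1) := this
      · filter_upwards [ae_restrict_mem measurableSet_uIoc] with t ht
        rw [Set.uIoc_of_le hy] at ht
        have ht0 : (0:ℝ) < t := lt_of_lt_of_le hY0 ht.1.le
        have htp : (0:ℝ) < t ^ p := Real.rpow_pos_of_pos ht0 _
        have hdist := (hY₀ t (le_trans (le_max_left _ _) ht.1.le))
        rw [Real.dist_eq] at hdist
        have : f t - L * t ^ p = (f t / t ^ p - L) * t ^ p := by
          field_simp
        rw [Real.norm_eq_abs, this, abs_mul, abs_of_pos htp]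
        exact mul_le_mul_of_nonneg_right hdist.le htp.le
    calc |(∫ t in (0:ℝ)..y, f t) - L * y ^ (p + 1) / (p + 1)|
        = |((∫ t in (0:ℝ)..Y, f t) - L * Y ^ (p + 1) / (p + 1)) +
            ((∫ t in Y..y, f t) - L * (y ^ (p + 1) - Y ^ (p + 1)) / (p + 1))| := by
          rw [hsplit]; ring_nf
      _ ≤ C₀ + |(∫ t in Y..y, f t) - L * (y ^ (p + 1) - Y ^ (p + 1)) / (p + 1)| :=
          abs_add_le _ _
      _ ≤ C₀ + δ₁ * (y ^ (p + 1) - Y ^ (p + 1)) / (p + 1) := by linarith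
      _ ≤ C₀ + δ₁ * y ^ (p + 1) / (p + 1) := by
          gcongr
          linarith
  have hCdiv : Tendsto (fun y : ℝ => C₀ / y ^ (p + 1)) atTop (𝓝 0) :=
    tendsto_const_nhds.div_atTop (tendsto_rpow_atTop hp1)
  filter_upwards [eventually_ge_atTop Y,
    hCdiv.eventually (Iio_mem_nhds (half_pos hδ))] with y hyY hyC
  have hy0 : (0:ℝ) < y := lt_of_lt_of_le hY0 hyY
  have hyp : (0:ℝ) < y ^ (p + 1) := Real.rpow_pos_of_pos hy0 _
  rw [Real.dist_eq]
  have heq : (∫ t in (0:ℝ)..y, f t) / y ^ (p + 1) - L / (p + 1) =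
      ((∫ t in (0:ℝ)..y, f t) - L * y ^ (p + 1) / (p + 1)) / y ^ (p + 1) := by
    field_simp
  rw [heq, abs_div, abs_of_pos hyp]
  have hk := key y hyY
  have h1 : |(∫ t in (0:ℝ)..y, f t) - L * y ^ (p + 1) / (p + 1)| / y ^ (p + 1) ≤
      (C₀ + δ₁ * y ^ (p + 1) / (p + 1)) / y ^ (p + 1) := by gcongr
  have h2 : (C₀ + δ₁ * y ^ (p + 1) / (p + 1)) / y ^ (p + 1) =
      C₀ / y ^ (p + 1) + δ₁ / (p + 1) := by
    rw [add_div]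
    congr 1
    rw [div_div, mul_comm (p + 1) (y ^ (p + 1)), ← div_div, mul_div_assoc,
      div_self hyp.ne', mul_one]
  have h3 : δ₁ / (p + 1) = δ / 4 := by
    rw [hδ₁def, div_div, mul_div_mul_comm, div_self hp1.ne', mul_one]
  have h4 : C₀ / y ^ (p + 1) < δ / 2 := hyC
  calc |(∫ t in (0:ℝ)..y, f t) - L * y ^ (p + 1) / (p + 1)| / y ^ (p + 1)
      ≤ (C₀ + δ₁ * y ^ (p + 1) / (p + 1)) / y ^ (p + 1) := h1
    _ = C₀ / y ^ (p + 1) + δ₁ / (p + 1) := h2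
    _ < δ / 2 + δ / 4 := by rw [h3]; linarith
    _ < δ := by linarith
lemma rho_inner_bound {ε a : ℝ} (hε : 0 ≤ ε) (ha : -1 < a) {s : ℝ} (hs : 0 < s) :
    rho ε (-a) s * ∫ τ in (0:ℝ)..s, rho ε a τ ≤ s * max 1 (1 / (1 + a)) := by
  have hbs : 0 < ε ^ 2 + s ^ 2 := by positivity
  rcases le_or_gt 0 a with h0 | h0
  · have hmono : ∀ τ ∈ Icc (0:ℝ) s, rho ε a τ ≤ rho ε a s := by
      intro τ hτ
      apply Real.rpow_le_rpow (by positivity) ?_ (by linarith : (0:ℝ) ≤ a / 2)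
      nlinarith [hτ.1, hτ.2]
    have hI : (∫ τ in (0:ℝ)..s, rho ε a τ) ≤ ∫ _ in (0:ℝ)..s, rho ε a s :=
      intervalIntegral.integral_mono_on hs.le (rho_intervalIntegrable hε ha hs.le)
        intervalIntegrable_const hmono
    rw [intervalIntegral.integral_const, smul_eq_mul, sub_zero] at hI
    calc rho ε (-a) s * ∫ τ in (0:ℝ)..s, rho ε a τ
        ≤ rho ε (-a) s * (s * rho ε a s) := mul_le_mul_of_nonneg_left hI (rho_nonneg _ _ _)
      _ = s * (rho ε (-a) s * rho ε a s) := by ring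
      _ = s := by rw [rho_mul_inv hbs, mul_one]
      _ ≤ s * max 1 (1 / (1 + a)) := by
          nlinarith [le_max_left (1:ℝ) (1 / (1 + a)), hs]
  · have ha1 : (0:ℝ) < 1 + a := by linarith
    -- pointwise bound on Ioc 0 s
    have hpt : ∀ τ ∈ Ioc (0:ℝ) s, rho ε a τ ≤ rho ε a s * s ^ (-a) * τ ^ a := by
      intro τ hτ
      have hτ0 : 0 < τ := hτ.1
      have hbase : (0:ℝ) < (ε ^ 2 + s ^ 2) * (τ / s) ^ 2 := by positivity
      have hle : (ε ^ 2 + s ^ 2) * (τ / s) ^ 2 ≤ ε ^ 2 + τ ^ 2 := by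
        rw [div_pow, ← mul_div_assoc, div_le_iff₀ (by positivity : (0:ℝ) < s ^ 2)]
        have h2 : τ ^ 2 ≤ s ^ 2 := by nlinarith [hτ.1.le, hτ.2]
        nlinarith [mul_le_mul_of_nonneg_left h2 (sq_nonneg ε)]
      have h1 : rho ε a τ ≤ ((ε ^ 2 + s ^ 2) * (τ / s) ^ 2) ^ (a / 2) :=
        Real.rpow_le_rpow_of_nonpos hbase hle (by linarith : a / 2 ≤ 0)
      have h2 : ((ε ^ 2 + s ^ 2) * (τ / s) ^ 2) ^ (a / 2) =
          rho ε a s * (τ / s) ^ a := by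
        rw [Real.mul_rpow hbs.le (by positivity), rho]
        congr 1
        rw [← Real.rpow_natCast (τ / s) 2, ← Real.rpow_mul (by positivity : (0:ℝ) ≤ τ / s)]
        congr 1
        push_cast
        ring
      have h3 : (τ / s) ^ a = τ ^ a * s ^ (-a) := by
        rw [Real.div_rpow hτ0.le hs.le, Real.rpow_neg hs.le, div_eq_mul_inv]
      calc rho ε a τ ≤ rho ε a s * (τ / s) ^ a := le_of_le_of_eq h1 h2
        _ = rho ε a s * s ^ (-a) * τ ^ a := by rw [h3]; ring
    have hbint : IntervalIntegrable (fun τ : ℝ => rho ε a s * s ^ (-a) * τ ^ a)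
        volume 0 s := (intervalIntegral.intervalIntegrable_rpow' ha).const_mul _
    have hI : (∫ τ in (0:ℝ)..s, rho ε a τ) ≤
        ∫ τ in (0:ℝ)..s, rho ε a s * s ^ (-a) * τ ^ a := by
      apply intervalIntegral.integral_mono_ae_restrict hs.le
        (rho_intervalIntegrable hε ha hs.le) hbint
      have hzero : (volume.restrict (Icc (0:ℝ) s)) {0} = 0 := by
        rw [Measure.restrict_apply (measurableSet_singleton 0)]
        exact measure_mono_null inter_subset_left (measure_singleton 0)
      have hsing : ∀ᵐ τ ∂(volume.restrict (Icc (0:ℝ) s)), τ ≠ 0 := by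
        rw [ae_iff]
        refine measure_mono_null ?_ hzero
        intro x hx
        simp only [mem_setOf_eq, not_not] at hx
        simp [hx]
      filter_upwards [hsing, ae_restrict_mem measurableSet_Icc] with τ hτ0 hτmem
      exact hpt τ ⟨lt_of_le_of_ne hτmem.1 (Ne.symm hτ0), hτmem.2⟩
    rw [intervalIntegral.integral_const_mul, integral_rpow (Or.inl ha),
      Real.zero_rpow (by linarith : a + 1 ≠ 0), sub_zero] at hI
    have hss : s ^ (-a) * (s ^ (a + 1) / (a + 1)) = s / (1 + a) := by
      rw [← mul_div_assoc, ← Real.rpow_add hs, show -a + (a + 1) = 1 by ring,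
        Real.rpow_one, show a + 1 = 1 + a by ring]
    calc rho ε (-a) s * ∫ τ in (0:ℝ)..s, rho ε a τ
        ≤ rho ε (-a) s * (rho ε a s * (s ^ (-a) * (s ^ (a + 1) / (a + 1)))) := by
          apply mul_le_mul_of_nonneg_left ?_ (rho_nonneg _ _ _)
          calc (∫ τ in (0:ℝ)..s, rho ε a τ)
              ≤ rho ε a s * s ^ (-a) * (s ^ (a + 1) / (a + 1)) := hI
            _ = rho ε a s * (s ^ (-a) * (s ^ (a + 1) / (a + 1))) := by ring
      _ = (rho ε (-a) s * rho ε a s) * (s / (1 + a)) := by rw [hss]; ring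
      _ = s * (1 / (1 + a)) := by rw [rho_mul_inv hbs]; ring
      _ ≤ s * max 1 (1 / (1 + a)) :=
          mul_le_mul_of_nonneg_left (le_max_right _ _) hs.le
lemma hfun_step {a ε : ℝ} (ha : -1 < a) (hε : 0 ≤ ε) (i : ℕ) {c : ℝ}
    (hcont : ∀ b : ℝ, 0 ≤ b → ContinuousOn (hfun ε a i) (Icc 0 b))
    (htend : Tendsto (fun y => hfun ε a i y / y ^ ((2 * i : ℕ) : ℝ)) atTop (𝓝 c)) :
    (∀ b : ℝ, 0 ≤ b → ContinuousOn (hfun ε a (i + 1)) (Icc 0 b)) ∧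
    Tendsto (fun y => hfun ε a (i + 1) y / y ^ ((2 * (i + 1) : ℕ) : ℝ)) atTop
      (𝓝 (c / ((2 * (i : ℝ) + 1 + a) * (2 * (i : ℝ) + 2)))) := by
  set q : ℝ := ((2 * i : ℕ) : ℝ) with hqdef
  have hq0 : 0 ≤ q := by positivity
  set φ : ℝ → ℝ := fun τ => rho ε a τ * hfun ε a i τ with hφ
  -- interval integrability of the inner integrand
  have hφint : ∀ s : ℝ, 0 ≤ s → IntervalIntegrable φ volume 0 s := by
    intro s hs
    obtain ⟨M₀, hM₀⟩ := (isCompact_Icc (a := (0:ℝ)) (b := s)).exists_bound_of_continuousOn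
      (hcont s hs)
    set M := max M₀ 0 with hMdef
    have hM : ∀ τ ∈ Icc (0:ℝ) s, |hfun ε a i τ| ≤ M := fun τ hτ =>
      le_trans (hM₀ τ hτ) (le_max_left _ _)
    rw [intervalIntegrable_iff_integrableOn_Ioc_of_le hs]
    have hrind := rho_intervalIntegrable hε ha hs
    rw [intervalIntegrable_iff_integrableOn_Ioc_of_le hs] at hrind
    apply Integrable.mono' (hrind.const_mul M)
    · apply AEStronglyMeasurable.mul
      · exact ((rho_continuousOn hε (Ioc 0 s) (fun y hy => hy.1.ne')).aestronglyMeasurable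
          measurableSet_Ioc)
      · exact ((hcont s hs).mono Ioc_subset_Icc_self).aestronglyMeasurable measurableSet_Ioc
    · filter_upwards [ae_restrict_mem measurableSet_Ioc] with τ hτ
      have h1 : |hfun ε a i τ| ≤ M := hM τ (Ioc_subset_Icc_self hτ)
      calc ‖φ τ‖ = rho ε a τ * |hfun ε a i τ| := by
            rw [Real.norm_eq_abs, abs_mul, abs_of_nonneg (rho_nonneg _ _ _)]
        _ ≤ rho ε a τ * M := mul_le_mul_of_nonneg_left h1 (rho_nonneg _ _ _)
        _ = M * rho ε a τ := mul_comm _ _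
  set g : ℝ → ℝ := fun s => ∫ τ in (0:ℝ)..s, φ τ with hg
  set F : ℝ → ℝ := fun s => rho ε (-a) s * g s with hF
  -- interval integrability of the outer integrand
  have hFint : ∀ b : ℝ, 0 ≤ b → IntervalIntegrable F volume 0 b := by
    intro b hb
    obtain ⟨M₀, hM₀⟩ := (isCompact_Icc (a := (0:ℝ)) (b := b)).exists_bound_of_continuousOn
      (hcont b hb)
    set M := max M₀ 0 with hMdef
    have hM0 : (0:ℝ) ≤ M := le_max_right _ _
    have hM : ∀ τ ∈ Icc (0:ℝ) b, |hfun ε a i τ| ≤ M := fun τ hτ =>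
      le_trans (hM₀ τ hτ) (le_max_left _ _)
    have hK : ∀ s ∈ Ioc (0:ℝ) b, ‖F s‖ ≤ M * (b * max 1 (1 / (1 + a))) := by
      intro s hs
      have hgs : |g s| ≤ M * ∫ τ in (0:ℝ)..s, rho ε a τ := by
        have hb1 : IntervalIntegrable (fun τ => M * rho ε a τ) volume 0 s :=
          (rho_intervalIntegrable hε ha hs.1.le).const_mul M
        have hnn : 0 ≤ ∫ τ in (0:ℝ)..s, rho ε a τ :=
          intervalIntegral.integral_nonneg hs.1.le (fun τ _ => rho_nonneg _ _ _)
        have hbd := intervalIntegral.norm_integral_le_abs_of_norm_le (μ := volume)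
          (f := φ) (g := fun τ => M * rho ε a τ) (a := 0) (b := s) ?_ hb1
        · rw [intervalIntegral.integral_const_mul] at hbd
          calc |g s| ≤ |M * ∫ τ in (0:ℝ)..s, rho ε a τ| := hbd
            _ = M * ∫ τ in (0:ℝ)..s, rho ε a τ := abs_of_nonneg (mul_nonneg hM0 hnn)
        · filter_upwards [ae_restrict_mem measurableSet_uIoc] with τ hτ
          rw [Set.uIoc_of_le hs.1.le] at hτ
          have h1 : |hfun ε a i τ| ≤ M := hM τ ⟨hτ.1.le, le_trans hτ.2 hs.2⟩
          calc ‖φ τ‖ = rho ε a τ * |hfun ε a i τ| := by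
                rw [Real.norm_eq_abs, abs_mul, abs_of_nonneg (rho_nonneg _ _ _)]
            _ ≤ rho ε a τ * M := mul_le_mul_of_nonneg_left h1 (rho_nonneg _ _ _)
            _ = M * rho ε a τ := mul_comm _ _
      have hmax : (0:ℝ) ≤ max 1 (1 / (1 + a)) := le_trans zero_le_one (le_max_left _ _)
      calc ‖F s‖ = rho ε (-a) s * |g s| := by
            rw [Real.norm_eq_abs, abs_mul, abs_of_nonneg (rho_nonneg _ _ _)]
        _ ≤ rho ε (-a) s * (M * ∫ τ in (0:ℝ)..s, rho ε a τ) :=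
            mul_le_mul_of_nonneg_left hgs (rho_nonneg _ _ _)
        _ = M * (rho ε (-a) s * ∫ τ in (0:ℝ)..s, rho ε a τ) := by ring
        _ ≤ M * (s * max 1 (1 / (1 + a))) :=
            mul_le_mul_of_nonneg_left (rho_inner_bound hε ha hs.1) hM0
        _ ≤ M * (b * max 1 (1 / (1 + a))) := by
            apply mul_le_mul_of_nonneg_left ?_ hM0
            exact mul_le_mul_of_nonneg_right hs.2 hmax
    have hgcont : ContinuousOn g (Icc 0 b) := by
      have hint : IntegrableOn φ (uIcc (0:ℝ) b) volume := by
        rw [Set.uIcc_of_le hb, integrableOn_Icc_iff_integrableOn_Ioc]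
        exact (intervalIntegrable_iff_integrableOn_Ioc_of_le hb).1 (hφint b hb)
      have := intervalIntegral.continuousOn_primitive_interval (a := (0:ℝ)) (b := b)
        (f := φ) (μ := volume) hint
      rwa [Set.uIcc_of_le hb] at this
    rw [intervalIntegrable_iff_integrableOn_Ioc_of_le hb]
    apply Integrable.mono' (g := fun _ => M * (b * max 1 (1 / (1 + a))))
      (integrableOn_const measure_Ioc_lt_top.ne)
    · apply AEStronglyMeasurable.mul
      · exact ((rho_continuousOn hε (Ioc 0 b) (fun y hy => hy.1.ne')).aestronglyMeasurable
          measurableSet_Ioc)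
      · exact (hgcont.mono Ioc_subset_Icc_self).aestronglyMeasurable measurableSet_Ioc
    · filter_upwards [ae_restrict_mem measurableSet_Ioc] with s hs
      exact hK s hs
  -- limits
  have hφtend : Tendsto (fun τ => φ τ / τ ^ (q + a)) atTop (𝓝 c) := by
    have h1 := (rho_div_rpow_tendsto hε a).mul htend
    rw [one_mul] at h1
    apply Tendsto.congr' ?_ h1
    filter_upwards [eventually_gt_atTop (0:ℝ)] with y hy
    rw [div_mul_div_comm, Real.rpow_add hy, mul_comm (y ^ q) (y ^ a)]
  have hgtend := tendsto_primitive_div_rpow (by linarith : (-1:ℝ) < q + a) hφint hφtend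
  have hFtend : Tendsto (fun s => F s / s ^ (q + 1)) atTop (𝓝 (c / (q + a + 1))) := by
    have h1 := (rho_div_rpow_tendsto hε (-a)).mul hgtend
    rw [one_mul] at h1
    apply Tendsto.congr' ?_ h1
    filter_upwards [eventually_gt_atTop (0:ℝ)] with y hy
    rw [div_mul_div_comm]
    congr 1
    rw [← Real.rpow_add hy, show -a + (q + a + 1) = q + 1 by ring]
  have hfinal := tendsto_primitive_div_rpow (by linarith : (-1:ℝ) < q + 1) hFint hFtend
  constructor
  · intro b hb
    have hint : IntegrableOn F (uIcc (0:ℝ) b) volume := by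
      rw [Set.uIcc_of_le hb, integrableOn_Icc_iff_integrableOn_Ioc]
      exact (intervalIntegrable_iff_integrableOn_Ioc_of_le hb).1 (hFint b hb)
    have := intervalIntegral.continuousOn_primitive_interval (a := (0:ℝ)) (b := b)
      (f := F) (μ := volume) hint
    rw [Set.uIcc_of_le hb] at this
    exact this
  · have heq1 : ((2 * (i + 1) : ℕ) : ℝ) = q + 1 + 1 := by
      rw [hqdef]; push_cast; ring
    have heq2 : c / (q + a + 1) / (q + 1 + 1) =
        c / ((2 * (i : ℝ) + 1 + a) * (2 * (i : ℝ) + 2)) := by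
      rw [div_div, hqdef]
      push_cast
      ring_nf
    rw [heq1, ← heq2]
    exact hfinal
lemma hfun_tendsto {a ε : ℝ} (ha : -1 < a) (hε : 0 ≤ ε) (i : ℕ) :
    (∀ b : ℝ, 0 ≤ b → ContinuousOn (hfun ε a i) (Icc 0 b)) ∧
    Tendsto (fun y => hfun ε a i y / y ^ ((2 * i : ℕ) : ℝ)) atTop
      (𝓝 (∏ m ∈ Finset.Icc 1 i, 1 / (2 * (m : ℝ) * (2 * (m : ℝ) - 1 + a)))) := by
  induction i with
  | zero =>
    constructor
    · intro b _
      show ContinuousOn (fun _ => (1:ℝ)) _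
      exact continuousOn_const
    · simp only [Nat.mul_zero, Nat.cast_zero, Real.rpow_zero]
      have : Finset.Icc 1 0 = (∅ : Finset ℕ) := Finset.Icc_eq_empty (by norm_num)
      rw [this, Finset.prod_empty]
      show Tendsto (fun _ : ℝ => (1:ℝ) / 1) atTop (𝓝 1)
      simpa using tendsto_const_nhds
  | succ i ih =>
    obtain ⟨h1, h2⟩ := ih
    obtain ⟨h1', h2'⟩ := hfun_step ha hε i h1 h2
    refine ⟨h1', ?_⟩
    have hprod : (∏ m ∈ Finset.Icc 1 (i + 1), 1 / (2 * (m : ℝ) * (2 * (m : ℝ) - 1 + a))) =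
        (∏ m ∈ Finset.Icc 1 i, 1 / (2 * (m : ℝ) * (2 * (m : ℝ) - 1 + a))) /
          ((2 * (i : ℝ) + 1 + a) * (2 * (i : ℝ) + 2)) := by
      rw [Finset.prod_Icc_succ_top (Nat.succ_le_succ (Nat.zero_le i))]
      push_cast
      rw [one_div, div_eq_mul_inv]
      congr 2
      ring
    rw [hprod]
    exact h2'

/-- asymptotics of the functions `g_{2i}` in the Liouville theorem:
for every `i ≥ 1`, `h_i(y)/y^{2i} → ∏_{m=1}^{i} 1/(2m(2m−1+a))` as `y → +∞`;
in particular `h_1(y)/y² → 1/(2(1+a))`. -/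

theorem statement17 (a : ℝ) (ha : -1 < a) (ε : ℝ) (hε : ε ∈ Set.Ico (0 : ℝ) 1) :
    (∀ i : ℕ, 1 ≤ i →
      Filter.Tendsto (fun y : ℝ => hfun ε a i y / y ^ (2 * i)) Filter.atTop
        (nhds (∏ m ∈ Finset.Icc 1 i, 1 / (2 * (m : ℝ) * (2 * (m : ℝ) - 1 + a))))) ∧
    Filter.Tendsto (fun y : ℝ => hfun ε a 1 y / y ^ 2) Filter.atTop
      (nhds (1 / (2 * (1 + a)))) := by
  have hε0 : 0 ≤ ε := hε.1
  have first : ∀ i : ℕ, 1 ≤ i →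
      Filter.Tendsto (fun y : ℝ => hfun ε a i y / y ^ (2 * i)) Filter.atTop
        (nhds (∏ m ∈ Finset.Icc 1 i, 1 / (2 * (m : ℝ) * (2 * (m : ℝ) - 1 + a)))) := by
    intro i _
    have h := (hfun_tendsto ha hε0 i).2
    simp only [Real.rpow_natCast] at h
    exact h
  refine ⟨first, ?_⟩
  have h := first 1 le_rfl
  have hval : (∏ m ∈ Finset.Icc (1:ℕ) 1, 1 / (2 * (m : ℝ) * (2 * (m : ℝ) - 1 + a))) =
      1 / (2 * (1 + a)) := by
    rw [Finset.Icc_self, Finset.prod_singleton]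
    norm_num
  rw [hval] at h
  simpa using h
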